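/- arXiv:2604.11268 — 2 statements merged into one kernel-verified Lean document; each statement's English description precedes it below -/
import Mathlib

section
/- Suppose real symmetric-sized matrices P_{jj} ∈ ℝ^{n_j×n_j} (j = 1, …, k) satisfy the coupled Lyapunov equations A₁ P₁₁ + P₁₁ A₁ᵀ + B₁ B₁ᵀ = 0 and, for j = 2, …, k, A_j P_{jj} + P_{jj} A_jᵀ + N_{j−1} P_{(j−1)(j−1)} N_{j−1}ᵀ = 0. Then the block-diagonal matrix P = blockdiag(P₁₁, …, P_{kk}) satisfies the generalized Lyapunov (controllability Gramian) equation of the aggregated bilinear system: A P + P Aᵀ + N P Nᵀ + B Bᵀ = 0, where A, N, B are the aggregated K-power system matrices. -/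
open Matrix

/-- The aggregated block-diagonal matrix `blockdiag(M₀, …, M_{k-1})` (indices are 0-based:
block `j` has dimension `n j`). -/
def aggBlockDiag {α : Type*} [Zero α] (k : ℕ) (n : ℕ → ℕ)
    (M : (j : ℕ) → Matrix (Fin (n j)) (Fin (n j)) α) :
    Matrix ((j : Fin k) × Fin (n j)) ((j : Fin k) × Fin (n j)) α :=
  fun p q =>
    if h : (p.1 : ℕ) = (q.1 : ℕ) then M (p.1 : ℕ) p.2 (Fin.cast (congrArg n h.symm) q.2) else 0

/-- The aggregated block-subdiagonal matrix `N` whose only nonzero blocks are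
`N j` placed in block position `(j+1, j)`. -/
def aggSubDiag {α : Type*} [Zero α] (k : ℕ) (n : ℕ → ℕ)
    (N : (j : ℕ) → Matrix (Fin (n (j + 1))) (Fin (n j)) α) :
    Matrix ((j : Fin k) × Fin (n j)) ((j : Fin k) × Fin (n j)) α :=
  fun p q =>
    if h : (p.1 : ℕ) = (q.1 : ℕ) + 1 then N (q.1 : ℕ) (Fin.cast (congrArg n h) p.2) q.2 else 0

/-- The aggregated input vector `B` whose first block is `B₁` and all other blocks are zero. -/
def aggB {α : Type*} [Zero α] (k : ℕ) (n : ℕ → ℕ) (B1 : Fin (n 0) → α) :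
    ((j : Fin k) × Fin (n j)) → α :=
  fun p => if h : (p.1 : ℕ) = 0 then B1 (Fin.cast (congrArg n h) p.2) else 0

/-!
The products `A P`, `P Aᵀ`, `N P Nᵀ` and `B Bᵀ` of the aggregated system are all block diagonal:
`N` moves block `j` to block `j + 1`, so `N P Nᵀ` carries `N_j P_j N_jᵀ` in block `j + 1` and
nothing in block `0`, while `B Bᵀ` is `B₁ B₁ᵀ` in block `0`. Hence the generalized Lyapunov
residual of the aggregate is the block-diagonal matrix of the subsystem residuals, which vanish
by hypothesis.
-/

section Aggregation

variable {α : Type*} {k : ℕ} {n : ℕ → ℕ}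

theorem aggBlockDiag_eq_blockDiagonal' [Zero α]
    (M : (j : ℕ) → Matrix (Fin (n j)) (Fin (n j)) α) :
    aggBlockDiag k n M = blockDiagonal' fun j : Fin k => M j := by
  ext ⟨a, x⟩ ⟨b, y⟩
  by_cases h : a = b
  · subst h
    simp [aggBlockDiag]
  · simp [aggBlockDiag, blockDiagonal'_apply_ne _ _ _ h, Fin.val_ne_of_ne h]

theorem mul_blockDiagonal'_apply {m : Type*} [NonUnitalNonAssocSemiring α]
    {ι : Type*} [Fintype ι] [DecidableEq ι] {d e : ι → Type*} [∀ i, Fintype (d i)]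
    (M : Matrix m ((i : ι) × d i) α) (D : (i : ι) → Matrix (d i) (e i) α)
    (p : m) (b : ι) (y : e b) :
    (M * blockDiagonal' D) p ⟨b, y⟩ = ∑ z, M p ⟨b, z⟩ * D b z y := by
  rw [mul_apply, Fintype.sum_sigma, Finset.sum_eq_single b]
  · simp
  · intro c _ hc
    simp [blockDiagonal'_apply_ne _ _ _ hc]
  · simp

theorem aggSubDiag_mul_blockDiagonal' [NonUnitalNonAssocSemiring α]
    (N : (j : ℕ) → Matrix (Fin (n (j + 1))) (Fin (n j)) α)
    (P : (j : ℕ) → Matrix (Fin (n j)) (Fin (n j)) α) :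
    aggSubDiag k n N * (blockDiagonal' fun j : Fin k => P j) =
      aggSubDiag k n fun j => N j * P j := by
  ext p ⟨b, y⟩
  rw [mul_blockDiagonal'_apply]
  by_cases h : (p.1 : ℕ) = b + 1
  · simp [aggSubDiag, h, mul_apply]
  · simp [aggSubDiag, h]

def succBlocks [Zero α] (F : (j : ℕ) → Matrix (Fin (n (j + 1))) (Fin (n (j + 1))) α) :
    (j : ℕ) → Matrix (Fin (n j)) (Fin (n j)) α
  | 0 => 0
  | j + 1 => F j

theorem aggSubDiag_mul_transpose_aggSubDiag [NonUnitalNonAssocSemiring α]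
    (M N : (j : ℕ) → Matrix (Fin (n (j + 1))) (Fin (n j)) α) :
    aggSubDiag k n M * (aggSubDiag k n N)ᵀ =
      blockDiagonal' fun j : Fin k => succBlocks (fun j => M j * (N j)ᵀ) j := by
  ext ⟨⟨a, ha⟩, x⟩ ⟨b, y⟩
  rw [mul_apply, Fintype.sum_sigma]
  cases a with
  | zero =>
    by_cases h : (⟨0, ha⟩ : Fin k) = b
    · subst h
      simp [aggSubDiag, succBlocks]
    · simp [aggSubDiag, blockDiagonal'_apply_ne _ _ _ h]
  | succ a =>
    rw [Finset.sum_eq_single ⟨a, by omega⟩]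
    · by_cases h : (⟨a + 1, ha⟩ : Fin k) = b
      · subst h
        simp [aggSubDiag, succBlocks, mul_apply]
      · have hb : (b : ℕ) ≠ a + 1 := fun hb => h (Fin.ext hb.symm)
        simp [aggSubDiag, blockDiagonal'_apply_ne _ _ _ h, hb]
    · intro c _ hc
      have hc : a ≠ c := fun hac => hc (Fin.ext hac.symm)
      simp [aggSubDiag, hc]
    · simp

theorem vecMulVec_aggB [MulZeroClass α] (B B' : Fin (n 0) → α) :
    vecMulVec (aggB k n B) (aggB k n B') =
      blockDiagonal' fun j : Fin k =>
        Pi.single (M := fun j => Matrix (Fin (n j)) (Fin (n j)) α) 0 (vecMulVec B B') j := by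
  ext ⟨⟨a, ha⟩, x⟩ ⟨b, y⟩
  by_cases h : ⟨a, ha⟩ = b
  · subst h
    cases a <;> simp [aggB, vecMulVec_apply]
  · have hab : a ≠ b := fun hab => h (Fin.ext hab)
    rw [blockDiagonal'_apply_ne _ _ _ h, vecMulVec_apply]
    by_cases ha0 : a = 0
    · simp [aggB, show (b : ℕ) ≠ 0 by omega]
    · simp [aggB, ha0]

theorem generalizedLyapunov_aggregate_eq_blockDiagonal' [NonUnitalNonAssocSemiring α]
    (A P : (j : ℕ) → Matrix (Fin (n j)) (Fin (n j)) α)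
    (N : (j : ℕ) → Matrix (Fin (n (j + 1))) (Fin (n j)) α) (B : Fin (n 0) → α) :
    aggBlockDiag k n A * aggBlockDiag k n P + aggBlockDiag k n P * (aggBlockDiag k n A)ᵀ +
        aggSubDiag k n N * aggBlockDiag k n P * (aggSubDiag k n N)ᵀ +
        vecMulVec (aggB k n B) (aggB k n B) =
      blockDiagonal' fun j : Fin k =>
        A j * P j + P j * (A j)ᵀ + succBlocks (fun j => N j * P j * (N j)ᵀ) j +
          Pi.single (M := fun j => Matrix (Fin (n j)) (Fin (n j)) α) 0 (vecMulVec B B) j := by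
  simp only [aggBlockDiag_eq_blockDiagonal', aggSubDiag_mul_blockDiagonal',
    aggSubDiag_mul_transpose_aggSubDiag, vecMulVec_aggB, blockDiagonal'_transpose,
    ← blockDiagonal'_mul, ← blockDiagonal'_add]
  rfl

end Aggregation

theorem kpower_controllability_gramian_block_diagonal_general (k : ℕ) (n : ℕ → ℕ)
    (A : (j : ℕ) → Matrix (Fin (n j)) (Fin (n j)) ℝ)
    (N : (j : ℕ) → Matrix (Fin (n (j + 1))) (Fin (n j)) ℝ)
    (B1 : Fin (n 0) → ℝ)
    (P : (j : ℕ) → Matrix (Fin (n j)) (Fin (n j)) ℝ)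
    (h0 : A 0 * P 0 + P 0 * (A 0)ᵀ + vecMulVec B1 B1 = 0)
    (hstep : ∀ j : ℕ, j + 1 < k →
      A (j + 1) * P (j + 1) + P (j + 1) * (A (j + 1))ᵀ + N j * P j * (N j)ᵀ = 0) :
    aggBlockDiag k n A * aggBlockDiag k n P +
        aggBlockDiag k n P * (aggBlockDiag k n A)ᵀ +
        aggSubDiag k n N * aggBlockDiag k n P * (aggSubDiag k n N)ᵀ +
        vecMulVec (aggB k n B1) (aggB k n B1) = 0 := by
  rw [generalizedLyapunov_aggregate_eq_blockDiagonal', ← blockDiagonal'_zero]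
  congr 1
  funext ⟨j, hj⟩
  cases j with
  | zero => simpa [succBlocks] using h0
  | succ j => simpa [succBlocks] using hstep j hj

/-- If the matrices `P j` solve the coupled subsystem Lyapunov equations
`A₀ P₀ + P₀ A₀ᵀ + B₁ B₁ᵀ = 0` and, for `j + 1 < k`,
`A_{j+1} P_{j+1} + P_{j+1} A_{j+1}ᵀ + N_j P_j N_jᵀ = 0`, then the block-diagonal matrix
`P = blockdiag(P₀, …, P_{k-1})` solves the generalized Lyapunov (controllability Gramian)
equation `A P + P Aᵀ + N P Nᵀ + B Bᵀ = 0` of the aggregated K-power bilinear system. -/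
theorem kpower_controllability_gramian_block_diagonal (k : ℕ) (hk : 1 ≤ k) (n : ℕ → ℕ)
    (A : (j : ℕ) → Matrix (Fin (n j)) (Fin (n j)) ℝ)
    (N : (j : ℕ) → Matrix (Fin (n (j + 1))) (Fin (n j)) ℝ)
    (B1 : Fin (n 0) → ℝ)
    (P : (j : ℕ) → Matrix (Fin (n j)) (Fin (n j)) ℝ)
    (h0 : A 0 * P 0 + P 0 * (A 0)ᵀ + vecMulVec B1 B1 = 0)
    (hstep : ∀ j : ℕ, j + 1 < k →
      A (j + 1) * P (j + 1) + P (j + 1) * (A (j + 1))ᵀ + N j * P j * (N j)ᵀ = 0) :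
    aggBlockDiag k n A * aggBlockDiag k n P +
        aggBlockDiag k n P * (aggBlockDiag k n A)ᵀ +
        aggSubDiag k n N * aggBlockDiag k n P * (aggSubDiag k n N)ᵀ +
        vecMulVec (aggB k n B1) (aggB k n B1) = 0 :=
  kpower_controllability_gramian_block_diagonal_general k n A N B1 P h0 hstep
end

section
/- Suppose real matrices Q_{jj} ∈ ℝ^{n_j×n_j} (j = 1, …, k) satisfy the coupled Lyapunov equations A_kᵀ Q_{kk} + Q_{kk} A_k + C_kᵀ C_k = 0 and, for j = k−1, k−2, …, 1, A_jᵀ Q_{jj} + Q_{jj} A_j + N_jᵀ Q_{(j+1)(j+1)} N_j = 0. Then the block-diagonal matrix Q = blockdiag(Q₁₁, …, Q_{kk}) satisfies the generalized Lyapunov (observability Gramian) equation of the aggregated bilinear system: Aᵀ Q + Q A + Nᵀ Q N + Cᵀ C = 0, where A, N, C are the aggregated K-power system matrices. -/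
open Matrix

/-- The aggregated output vector `C` whose last block is `C_k` and all other blocks are zero. -/
def aggC {α : Type*} [Zero α] (k : ℕ) (n : ℕ → ℕ) (Ck : Fin (n (k - 1)) → α) :
    ((j : Fin k) × Fin (n j)) → α :=
  fun p => if h : (p.1 : ℕ) = k - 1 then Ck (Fin.cast (congrArg n h) p.2) else 0

lemma fin_cast_self {m : ℕ} (h : m = m) (x : Fin m) : Fin.cast h x = x := rfl

lemma sigma_sum_eq {k : ℕ} {n : ℕ → ℕ} {α : Type*} [AddCommMonoid α]
    (f : ((j : Fin k) × Fin (n j)) → α) :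
    ∑ x : (j : Fin k) × Fin (n j), f x = ∑ i : Fin k, ∑ a : Fin (n i), f ⟨i, a⟩ := by
  rw [← Finset.univ_sigma_univ, Finset.sum_sigma]

lemma aggBlockDiag_transpose {α : Type*} [Zero α] (k : ℕ) (n : ℕ → ℕ)
    (M : (j : ℕ) → Matrix (Fin (n j)) (Fin (n j)) α) :
    (aggBlockDiag k n M)ᵀ = aggBlockDiag k n (fun j => (M j)ᵀ) := by
  ext ⟨⟨i, hi⟩, a⟩ ⟨⟨j, hj⟩, b⟩
  simp only [transpose_apply, aggBlockDiag]
  by_cases h : i = j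
  · subst h
    rw [dif_pos rfl, dif_pos rfl]
    rfl
  · rw [dif_neg (Ne.symm h), dif_neg h]

lemma aggBlockDiag_mul {α : Type*} [NonUnitalNonAssocSemiring α] (k : ℕ) (n : ℕ → ℕ)
    (M M' : (j : ℕ) → Matrix (Fin (n j)) (Fin (n j)) α) :
    aggBlockDiag k n M * aggBlockDiag k n M' = aggBlockDiag k n (fun j => M j * M' j) := by
  ext ⟨i, a⟩ ⟨j, b⟩
  simp only [mul_apply, aggBlockDiag]
  rw [sigma_sum_eq]
  rw [Finset.sum_eq_single_of_mem i (Finset.mem_univ i) ?side]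
  case side =>
    intro r _ hr
    apply Finset.sum_eq_zero
    intro c _
    rw [dif_neg (fun h => hr (Fin.ext h.symm)), zero_mul]
  by_cases h : (i : ℕ) = (j : ℕ)
  · rw [dif_pos h]
    apply Finset.sum_congr rfl
    intro c _
    rw [dif_pos rfl, dif_pos h]
    rfl
  · rw [dif_neg h]
    apply Finset.sum_eq_zero
    intro c _
    rw [dif_neg h, mul_zero]

lemma aggBlockDiag_mul_aggSubDiag {α : Type*} [NonUnitalNonAssocSemiring α] (k : ℕ) (n : ℕ → ℕ)
    (M : (j : ℕ) → Matrix (Fin (n j)) (Fin (n j)) α)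
    (N : (j : ℕ) → Matrix (Fin (n (j + 1))) (Fin (n j)) α) :
    aggBlockDiag k n M * aggSubDiag k n N = aggSubDiag k n (fun j => M (j + 1) * N j) := by
  ext ⟨⟨i, hi⟩, a⟩ ⟨⟨j, hj⟩, b⟩
  simp only [mul_apply, aggBlockDiag, aggSubDiag]
  rw [sigma_sum_eq]
  rw [Finset.sum_eq_single_of_mem ⟨i, hi⟩ (Finset.mem_univ _) ?side]
  case side =>
    intro r _ hr
    apply Finset.sum_eq_zero
    intro c _
    rw [dif_neg (fun h => hr (Fin.ext h.symm)), zero_mul]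
  by_cases h : i = j + 1
  · subst h
    rw [dif_pos rfl]
    apply Finset.sum_congr rfl
    intro c _
    rw [dif_pos rfl, dif_pos rfl]
    rfl
  · rw [dif_neg h]
    apply Finset.sum_eq_zero
    intro c _
    rw [dif_neg h, mul_zero]

lemma aggSubDiag_transpose_mul {α : Type*} [NonUnitalNonAssocSemiring α] (k : ℕ) (n : ℕ → ℕ)
    (N N' : (j : ℕ) → Matrix (Fin (n (j + 1))) (Fin (n j)) α) :
    (aggSubDiag k n N)ᵀ * aggSubDiag k n N' =
      aggBlockDiag k n (fun j => if j + 1 < k then (N j)ᵀ * N' j else 0) := by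
  ext ⟨⟨i, hi⟩, a⟩ ⟨⟨j, hj⟩, b⟩
  simp only [mul_apply, transpose_apply, aggBlockDiag, aggSubDiag]
  rw [sigma_sum_eq]
  by_cases h1 : i + 1 < k
  · rw [Finset.sum_eq_single_of_mem ⟨i + 1, h1⟩ (Finset.mem_univ _) ?side]
    case side =>
      intro r _ hr
      apply Finset.sum_eq_zero
      intro c _
      rw [dif_neg (fun h => hr (Fin.ext h)), zero_mul]
    by_cases h : i = j
    · subst h
      rw [dif_pos rfl, if_pos h1]
      simp only [transpose_apply, mul_apply]
      apply Finset.sum_congr rfl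
      intro c _
      rw [dif_pos trivial, dif_pos trivial]
      rfl
    · rw [dif_neg h]
      apply Finset.sum_eq_zero
      intro c _
      rw [dif_neg (fun hc : i + 1 = j + 1 => h (Nat.succ_injective hc)), mul_zero]
  · rw [Finset.sum_eq_zero]
    · by_cases h : i = j
      · rw [dif_pos h, if_neg (h ▸ h1), Matrix.zero_apply]
      · rw [dif_neg h]
    · intro r _
      apply Finset.sum_eq_zero
      intro c _
      rw [dif_neg (fun hc : (r : ℕ) = i + 1 => h1 (hc ▸ r.isLt)), zero_mul]

lemma aggBlockDiag_add {α : Type*} [AddZeroClass α] (k : ℕ) (n : ℕ → ℕ)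
    (M M' : (j : ℕ) → Matrix (Fin (n j)) (Fin (n j)) α) :
    aggBlockDiag k n M + aggBlockDiag k n M' = aggBlockDiag k n (fun j => M j + M' j) := by
  ext ⟨⟨i, hi⟩, a⟩ ⟨⟨j, hj⟩, b⟩
  simp only [Matrix.add_apply, aggBlockDiag]
  by_cases h : i = j
  · subst h; rw [dif_pos rfl, dif_pos rfl, dif_pos rfl]
  · rw [dif_neg h, dif_neg h, dif_neg h, add_zero]

/-- If the matrices `Q j` solve the coupled subsystem Lyapunov equations
`A_{k-1}ᵀ Q_{k-1} + Q_{k-1} A_{k-1} + C_kᵀ C_k = 0` and, for `j + 1 < k`,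
`A_jᵀ Q_j + Q_j A_j + N_jᵀ Q_{j+1} N_j = 0`, then the block-diagonal matrix
`Q = blockdiag(Q₀, …, Q_{k-1})` solves the generalized Lyapunov (observability Gramian)
equation `Aᵀ Q + Q A + Nᵀ Q N + Cᵀ C = 0` of the aggregated K-power bilinear system. -/
theorem kpower_observability_gramian_block_diagonal (k : ℕ) (hk : 1 ≤ k) (n : ℕ → ℕ)
    (A : (j : ℕ) → Matrix (Fin (n j)) (Fin (n j)) ℝ)
    (N : (j : ℕ) → Matrix (Fin (n (j + 1))) (Fin (n j)) ℝ)
    (Ck : Fin (n (k - 1)) → ℝ)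
    (Q : (j : ℕ) → Matrix (Fin (n j)) (Fin (n j)) ℝ)
    (hlast : (A (k - 1))ᵀ * Q (k - 1) + Q (k - 1) * A (k - 1) + vecMulVec Ck Ck = 0)
    (hstep : ∀ j : ℕ, j + 1 < k →
      (A j)ᵀ * Q j + Q j * A j + (N j)ᵀ * Q (j + 1) * N j = 0) :
    (aggBlockDiag k n A)ᵀ * aggBlockDiag k n Q +
        aggBlockDiag k n Q * aggBlockDiag k n A +
        (aggSubDiag k n N)ᵀ * aggBlockDiag k n Q * aggSubDiag k n N +
        vecMulVec (aggC k n Ck) (aggC k n Ck) = 0 := by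
  rw [aggBlockDiag_transpose, aggBlockDiag_mul, aggBlockDiag_mul, mul_assoc,
    aggBlockDiag_mul_aggSubDiag, aggSubDiag_transpose_mul, aggBlockDiag_add, aggBlockDiag_add]
  ext ⟨⟨i, hi⟩, a⟩ ⟨⟨j, hj⟩, b⟩
  simp only [Matrix.add_apply, aggBlockDiag, aggC, vecMulVec_apply, Matrix.zero_apply]
  by_cases hij : i = j
  · subst hij
    rw [dif_pos rfl]
    by_cases h1 : i + 1 < k
    · have hne : i ≠ k - 1 := by omega
      rw [dif_neg hne, zero_mul, if_pos h1, add_zero, ← Matrix.mul_assoc]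
      have := congrFun (congrFun (hstep i h1) a) (Fin.cast rfl b)
      simpa using this
    · have heq : i = k - 1 := by omega
      subst heq
      rw [dif_pos rfl, if_neg h1]
      have := congrFun (congrFun hlast a) (Fin.cast rfl b)
      simpa [fin_cast_self, vecMulVec_apply] using this
  · rw [dif_neg hij]
    by_cases hi' : i = k - 1
    · have hj' : j ≠ k - 1 := fun h => hij (hi'.trans h.symm)
      rw [dif_neg hj', mul_zero, zero_add]
    · rw [dif_neg hi', zero_mul, zero_add]
end
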